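/- arXiv:1210.6256 — 2 statements merged into one kernel-verified Lean document; each statement's English description precedes it below -/
import Mathlib

section
/- Let f be a nondegenerate triangle (a 2-simplex with noncollinear vertices, in ℝ² or in an affine plane of ℝ³), and let p be a polynomial function of total degree ≤ 2 on f. If the restriction of p to each of the three edges of f is affine, then p is affine on f. -/
noncomputable section

abbrev E2 := EuclideanSpace ℝ (Fin 2)

/-- `p` is (the restriction of) a real polynomial of total degree ≤ k on the plane. -/
def IsPolyLE2 (k : ℕ) (p : E2 → ℝ) : Prop :=
  ∃ P : MvPolynomial (Fin 2) ℝ, P.totalDegree ≤ k ∧ ∀ x, p x = MvPolynomial.eval (fun i => x i) P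

/-- `p` agrees with an affine function on the set `s`. -/
def AffineOn2 (s : Set E2) (p : E2 → ℝ) : Prop :=
  ∃ q : E2 →ᵃ[ℝ] ℝ, ∀ x ∈ s, p x = q x

/-- A degree-≤2 polynomial restricted to an affine parametrization of the plane
has the form `A s² + B s t + C t² + D s + E t + F`. -/
lemma key_quadratic_form (p : E2 → ℝ) (hp : IsPolyLE2 2 p) (a u v : E2) :
    ∃ A B C D E F : ℝ, ∀ s t : ℝ,
      p (a + s • u + t • v)
        = A*s^2 + B*(s*t) + C*t^2 + D*s + E*t + F := by
  obtain ⟨P, hdeg, hP⟩ := hp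
  have hsum : ∀ S : Finset (Fin 2 →₀ ℕ), (∀ m ∈ S, m 0 + m 1 ≤ 2) →
      ∃ A B C D E F : ℝ, ∀ s t : ℝ,
        (∑ m ∈ S, MvPolynomial.coeff m P *
          ((a 0 + s * u 0 + t * v 0) ^ m 0 * (a 1 + s * u 1 + t * v 1) ^ m 1))
          = A*s^2 + B*(s*t) + C*t^2 + D*s + E*t + F := by
    intro S
    induction S using Finset.induction with
    | empty => intro _; exact ⟨0,0,0,0,0,0, fun s t => by simp⟩
    | @insert m S hm ih =>
      intro hS
      obtain ⟨A,B,C,D,E,F,hrec⟩ := ih (fun n hn => hS n (Finset.mem_insert_of_mem hn))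
      have hb : m 0 + m 1 ≤ 2 := hS m (Finset.mem_insert_self m S)
      set c := MvPolynomial.coeff m P with hc
      have hcases : (m 0 = 0 ∧ m 1 = 0) ∨ (m 0 = 1 ∧ m 1 = 0) ∨ (m 0 = 0 ∧ m 1 = 1)
          ∨ (m 0 = 2 ∧ m 1 = 0) ∨ (m 0 = 1 ∧ m 1 = 1) ∨ (m 0 = 0 ∧ m 1 = 2) := by omega
      have hins : ∀ s t : ℝ,
          (∑ n ∈ insert m S, MvPolynomial.coeff n P *
            ((a 0 + s * u 0 + t * v 0) ^ n 0 * (a 1 + s * u 1 + t * v 1) ^ n 1))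
          = c * ((a 0 + s * u 0 + t * v 0) ^ m 0 * (a 1 + s * u 1 + t * v 1) ^ m 1)
            + (A*s^2 + B*(s*t) + C*t^2 + D*s + E*t + F) := by
        intro s t
        rw [Finset.sum_insert hm, hrec]
      rcases hcases with ⟨h0,h1⟩|⟨h0,h1⟩|⟨h0,h1⟩|⟨h0,h1⟩|⟨h0,h1⟩|⟨h0,h1⟩
      · exact ⟨A,B,C,D,E,F+c, fun s t => by rw [hins s t, h0, h1]; ring⟩
      · exact ⟨A,B,C,D+c*u 0,E+c*v 0,F+c*a 0, fun s t => by rw [hins s t, h0, h1]; ring⟩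
      · exact ⟨A,B,C,D+c*u 1,E+c*v 1,F+c*a 1, fun s t => by rw [hins s t, h0, h1]; ring⟩
      · exact ⟨A+c*u 0^2, B+2*c*(u 0*v 0), C+c*v 0^2, D+2*c*(a 0*u 0), E+2*c*(a 0*v 0),
          F+c*a 0^2, fun s t => by rw [hins s t, h0, h1]; ring⟩
      · exact ⟨A+c*(u 0*u 1), B+c*(u 0*v 1+v 0*u 1), C+c*(v 0*v 1),
          D+c*(a 0*u 1+u 0*a 1), E+c*(a 0*v 1+v 0*a 1), F+c*(a 0*a 1),
          fun s t => by rw [hins s t, h0, h1]; ring⟩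
      · exact ⟨A+c*u 1^2, B+2*c*(u 1*v 1), C+c*v 1^2, D+2*c*(a 1*u 1), E+2*c*(a 1*v 1),
          F+c*a 1^2, fun s t => by rw [hins s t, h0, h1]; ring⟩
  obtain ⟨A,B,C,D,E,F,h⟩ := hsum P.support (by
    intro m hm
    have h1 := MvPolynomial.le_totalDegree hm
    have h2 : m.sum (fun _ e => e) = m 0 + m 1 := by
      rw [Finsupp.sum_fintype _ _ (fun _ => rfl), Fin.sum_univ_two]
    omega)
  refine ⟨A,B,C,D,E,F, fun s t => ?_⟩
  rw [hP, MvPolynomial.eval_eq']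
  rw [← h s t]
  apply Finset.sum_congr rfl
  intro m _
  congr 1
  rw [Fin.prod_univ_two]
  rfl

/-- If a quadratic polynomial on a nondegenerate triangle is affine on each of the
three edges, then it is affine on the whole triangle. -/
theorem stmt_6 (w : Fin 3 → E2) (hw : AffineIndependent ℝ w)
    (p : E2 → ℝ) (hp : IsPolyLE2 2 p)
    (hedges : ∀ i j : Fin 3, i ≠ j → AffineOn2 (segment ℝ (w i) (w j)) p) :
    AffineOn2 (convexHull ℝ (Set.range w)) p := by
  classical
  set v : Fin 2 → E2 := ![w 1 - w 0, w 2 - w 0] with hv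
  obtain ⟨A,B,C,D,E,F,hkey⟩ := key_quadratic_form p hp (w 0) (v 0) (v 1)
  have edgeEq : ∀ (q : E2 →ᵃ[ℝ] ℝ) (i j : Fin 3), (∀ x ∈ segment ℝ (w i) (w j), p x = q x) →
      ∀ θ : ℝ, 0 ≤ θ → θ ≤ 1 →
        p (w i + θ • (w j - w i)) = θ * q.linear (w j - w i) + q (w i) := by
    intro q i j hq θ h0 h1
    rw [hq _ ⟨1-θ, θ, by linarith, h0, by ring, by module⟩]
    have h : w i + θ • (w j - w i) = θ • (w j - w i) +ᵥ w i := by rw [vadd_eq_add, add_comm]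
    rw [h, q.map_vadd, q.linear.map_smul, vadd_eq_add, smul_eq_mul]
  have hA : A = 0 := by
    obtain ⟨q, hq⟩ := hedges 0 1 (by decide)
    have comb : ∀ θ : ℝ, 0 ≤ θ → θ ≤ 1 →
        A*θ^2 + D*θ + F = θ * q.linear (w 1 - w 0) + q (w 0) := by
      intro θ h0 h1
      have h := hkey θ 0
      have hpt : w 0 + θ • v 0 + (0:ℝ) • v 1 = w 0 + θ • (w 1 - w 0) := by
        show w 0 + θ • (w 1 - w 0) + (0:ℝ) • (w 2 - w 0) = _
        module
      rw [hpt] at h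
      rw [← edgeEq q 0 1 hq θ h0 h1, h]; ring
    have c0 := comb 0 le_rfl zero_le_one
    have ch := comb (1/2) (by norm_num) (by norm_num)
    have c1 := comb 1 zero_le_one le_rfl
    norm_num at c0 ch c1
    linarith
  have hC : C = 0 := by
    obtain ⟨q, hq⟩ := hedges 0 2 (by decide)
    have comb : ∀ θ : ℝ, 0 ≤ θ → θ ≤ 1 →
        C*θ^2 + E*θ + F = θ * q.linear (w 2 - w 0) + q (w 0) := by
      intro θ h0 h1
      have h := hkey 0 θ
      have hpt : w 0 + (0:ℝ) • v 0 + θ • v 1 = w 0 + θ • (w 2 - w 0) := by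
        show w 0 + (0:ℝ) • (w 1 - w 0) + θ • (w 2 - w 0) = _
        module
      rw [hpt] at h
      rw [← edgeEq q 0 2 hq θ h0 h1, h]; ring
    have c0 := comb 0 le_rfl zero_le_one
    have ch := comb (1/2) (by norm_num) (by norm_num)
    have c1 := comb 1 zero_le_one le_rfl
    norm_num at c0 ch c1
    linarith
  have hB : B = 0 := by
    obtain ⟨q, hq⟩ := hedges 1 2 (by decide)
    have comb : ∀ θ : ℝ, 0 ≤ θ → θ ≤ 1 →
        A*(1-θ)^2 + B*((1-θ)*θ) + C*θ^2 + D*(1-θ) + E*θ + F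
          = θ * q.linear (w 2 - w 1) + q (w 1) := by
      intro θ h0 h1
      have h := hkey (1-θ) θ
      have hpt : w 0 + (1-θ) • v 0 + θ • v 1 = w 1 + θ • (w 2 - w 1) := by
        show w 0 + (1-θ) • (w 1 - w 0) + θ • (w 2 - w 0) = _
        module
      rw [hpt] at h
      rw [← edgeEq q 1 2 hq θ h0 h1, h]
    have c0 := comb 0 le_rfl zero_le_one
    have ch := comb (1/2) (by norm_num) (by norm_num)
    have c1 := comb 1 zero_le_one le_rfl
    norm_num at c0 ch c1
    nlinarith [c0, ch, c1, hA, hC]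
  have hli0 : LinearIndependent ℝ (fun i : {x : Fin 3 // x ≠ 0} => w i -ᵥ w 0) :=
    (affineIndependent_iff_linearIndependent_vsub ℝ w 0).mp hw
  have hli : LinearIndependent ℝ v := by
    have he : Function.Injective (fun i : Fin 2 => (![⟨1, by decide⟩, ⟨2, by decide⟩] :
        Fin 2 → {x : Fin 3 // x ≠ 0}) i) := by decide
    have := hli0.comp _ he
    convert this using 1
    funext i
    fin_cases i <;> simp [hv, vsub_eq_sub]
  have hcard : Fintype.card (Fin 2) = Module.finrank ℝ E2 := by
    simp [finrank_euclideanSpace_fin]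
  set b := basisOfLinearIndependentOfCardEqFinrank hli hcard with hb
  have hbv : ∀ i, b i = v i := fun i => by
    rw [hb, coe_basisOfLinearIndependentOfCardEqFinrank]
  set L : E2 →ₗ[ℝ] ℝ := b.constr ℝ ![D, E] with hL
  have hL0 : L (v 0) = D := by rw [← hbv 0, hL, Module.Basis.constr_basis]; rfl
  have hL1 : L (v 1) = E := by rw [← hbv 1, hL, Module.Basis.constr_basis]; rfl
  refine ⟨⟨fun x => L (x - w 0) + F, L, ?_⟩, ?_⟩
  · intro x y
    simp only [vadd_eq_add]
    have h : y + x - w 0 = y + (x - w 0) := by abel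
    rw [h, L.map_add]; ring
  · intro x _
    set s := b.repr (x - w 0) 0 with hs
    set t := b.repr (x - w 0) 1 with ht
    have hrepr : s • v 0 + t • v 1 = x - w 0 := by
      have := b.sum_repr (x - w 0)
      rwa [Fin.sum_univ_two, hbv 0, hbv 1, ← hs, ← ht] at this
    have hx : x = w 0 + s • v 0 + t • v 1 := by
      rw [add_assoc, hrepr]; abel
    have hp1 : p x = D*s + E*t + F := by
      rw [hx, hkey s t, hA, hB, hC]; ring
    have hq1 : L (x - w 0) + F = D*s + E*t + F := by
      rw [← hrepr, L.map_add, L.map_smul, L.map_smul, hL0, hL1, smul_eq_mul, smul_eq_mul]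
      ring
    rw [hp1]
    exact hq1.symm
end
end

section
/- Let g₁, g₂, g₃, g₄ ∈ ℝ³ be vectors such that any three of them form a basis of ℝ³ (e.g., the gradients of the barycentric coordinate functions of a nondegenerate tetrahedron). If M is a real 3×3 matrix satisfying g_iᵀ M g_j = 0 for all i ≠ j, then M = 0. -/
/-!
Write `g₄ = c₁ g₁ + c₂ g₂ + c₃ g₃` in the basis `g₁, g₂, g₃`. Every `cᵢ` is nonzero, since otherwise
`g₄` together with the two `gⱼ` other than `gᵢ` would be dependent. Off-diagonal vanishing gives
`0 = gᵢᵀ M g₄ = cᵢ · gᵢᵀ M gᵢ`, so the bilinear form `(x, y) ↦ xᵀ M y` also vanishes on the diagonal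
of the basis, hence everywhere.
-/

open Matrix

namespace Module.Basis

variable {ι K V P : Type*} [Field K] [AddCommGroup V] [Module K V] [AddCommGroup P] [Module K P]

theorem repr_ne_zero_of_linearIndependent_update [DecidableEq ι] (b : Basis ι K V) (i : ι) (v : V)
    (h : LinearIndependent K (Function.update b i v)) : b.repr v i ≠ 0 := by
  intro hvi
  apply linearIndependent_iff_notMem_span.mp h i
  have hoff : Function.update b i v '' (Set.univ \ {i}) = b '' (Set.univ \ {i}) :=
    Set.image_congr fun j hj => Function.update_of_ne (Set.notMem_singleton_iff.mp hj.2) _ _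
  rw [Function.update_self, hoff, b.mem_span_image]
  intro j hj
  exact ⟨trivial, fun hji => (Set.mem_singleton_iff.mp hji ▸ Finsupp.mem_support_iff.mp hj) hvi⟩

theorem apply_eq_repr_smul_of_pairwise (b : Basis ι K V) (B : V →ₗ[K] V →ₗ[K] P)
    (hB : Pairwise fun i j => B (b i) (b j) = 0) (i : ι) (v : V) :
    B (b i) v = b.repr v i • B (b i) (b i) := by
  suffices B (b i) = (b.coord i).smulRight (B (b i) (b i)) from LinearMap.congr_fun this v
  refine b.ext fun j => ?_
  obtain rfl | hij := eq_or_ne i j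
  · simp
  · simp [hB hij, Finsupp.single_eq_of_ne hij]

theorem bilin_eq_zero_of_pairwise_of_update [DecidableEq ι] (b : Basis ι K V) (v : V)
    (hv : ∀ i, LinearIndependent K (Function.update b i v)) (B : V →ₗ[K] V →ₗ[K] P)
    (hB : Pairwise fun i j => B (b i) (b j) = 0) (hBv : ∀ i, B (b i) v = 0) : B = 0 := by
  have hdiag (i : ι) : B (b i) (b i) = 0 := by
    have := hBv i
    rwa [b.apply_eq_repr_smul_of_pairwise B hB, smul_eq_zero,
      or_iff_right (b.repr_ne_zero_of_linearIndependent_update i v (hv i))] at this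
  refine LinearMap.ext_basis b b fun i j => ?_
  obtain rfl | hij := eq_or_ne i j
  · exact hdiag i
  · exact hB hij

end Module.Basis

/-- If `g₁, g₂, g₃, g₄ ∈ ℝ³` are such that any three of them are linearly
independent, and `M` is a 3×3 matrix with `gᵢᵀ M gⱼ = 0` for all `i ≠ j`,
then `M = 0`. -/
theorem stmt_9 (g : Fin 4 → (Fin 3 → ℝ))
    (hg : ∀ i j k : Fin 4, i ≠ j → i ≠ k → j ≠ k →
      LinearIndependent ℝ ![g i, g j, g k])
    (M : Matrix (Fin 3) (Fin 3) ℝ)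
    (hM : ∀ i j : Fin 4, i ≠ j → g i ⬝ᵥ M.mulVec (g j) = 0) :
    M = 0 := by
  let b := basisOfLinearIndependentOfCardEqFinrank (hg 0 1 2 (by decide) (by decide) (by decide))
    (by simp)
  have hb : ⇑b = g ∘ Fin.castSucc := by
    rw [coe_basisOfLinearIndependentOfCardEqFinrank]
    funext i; fin_cases i <;> rfl
  have hupdate (i : Fin 3) : LinearIndependent ℝ (Function.update b i (g 3)) := by
    rw [hb]
    fin_cases i <;>
      [convert hg 3 1 2 (by decide) (by decide) (by decide) using 1;
       convert hg 0 3 2 (by decide) (by decide) (by decide) using 1;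
       convert hg 0 1 3 (by decide) (by decide) (by decide) using 1] <;>
      (funext j; fin_cases j <;> rfl)
  have hB : toBilin' M = 0 := by
    refine b.bilin_eq_zero_of_pairwise_of_update (g 3) hupdate _ (fun i j hij => ?_) fun i => ?_
    · simpa [hb, toBilin'_apply'] using hM _ _ (Fin.castSucc_injective _ |>.ne hij)
    · simpa [hb, toBilin'_apply'] using hM _ (Fin.last 3) (Fin.castSucc_lt_last i).ne
  exact toBilin'.map_eq_zero_iff.mp hB
end
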